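/- arXiv:2302.08327 — 5 statements merged into one kernel-verified Lean document; each statement's English description precedes it below -/
import Mathlib

section
/- Let A be a rigid symmetric monoidal category with End(1) a field of characteristic 0, L an invertible object, and M an object with χ(M) ≠ 0 admitting an isomorphism u : M ≅ L ⊗ M^∨. Then L is a direct summand of M ⊗ M. -/
/-!
Dividing the braided coevaluation `𝟙 ⟶ N ⊗ M` by `χ(M)` splits the evaluation `N ⊗ M ⟶ 𝟙`,
so `𝟙` is a retract of `N ⊗ M`. Tensoring with `L` makes `L` a retract of `L ⊗ (N ⊗ M)`, which
`u` identifies with `M ⊗ M`.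
-/

open CategoryTheory MonoidalCategory

namespace CategoryTheory

variable {C : Type*} [Category C] [MonoidalCategory C]

def Retract.whiskerLeftOfUnit (L : C) {X : C} (h : Retract (𝟙_ C) X) : Retract L (L ⊗ X) :=
  (ρ_ L).symm.retract.trans (h.map (tensorLeft L))

section Braided

variable [BraidedCategory C] (M N : C) [ExactPairing M N]

def eulerChar : End (𝟙_ C) := η_ M N ≫ (β_ M N).hom ≫ ε_ M N

variable {M N} in
noncomputable def retractUnitOfIsUnitEulerChar (h : IsUnit (eulerChar M N)) :
    Retract (𝟙_ C) (N ⊗ M) where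
  i := h.unit.inv ≫ η_ M N ≫ (β_ M N).hom
  r := ε_ M N
  retract := by
    simpa only [End.mul_def, End.one_def, eulerChar, Units.inv_eq_val_inv, Category.assoc]
      using h.mul_val_inv

end Braided

end CategoryTheory

theorem invertible_direct_summand_of_polarisation_general {C : Type*} [Category C]
    [MonoidalCategory C] [SymmetricCategory C] [Preadditive C]
    (hfield : ∀ x : End (𝟙_ C), x ≠ 0 → IsUnit x)
    (M N L : C) [ExactPairing M N]
    (u : M ≅ L ⊗ N)
    (hχ : η_ M N ≫ (β_ M N).hom ≫ ε_ M N ≠ 0) :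
    ∃ (s : L ⟶ M ⊗ M) (r : M ⊗ M ⟶ L), s ≫ r = 𝟙 L := by
  let R : Retract L (M ⊗ M) :=
    ((retractUnitOfIsUnitEulerChar (hfield _ hχ)).whiskerLeftOfUnit L).trans
      (whiskerRightIso u M ≪≫ α_ L N M).symm.retract
  exact ⟨R.i, R.r, R.retract⟩

/-- Lemma 6.5 (l6.1) of "Chow-Lefschetz motives": in a rigid symmetric monoidal category
with `End(𝟙)` a field of characteristic `0`, if `L` is an invertible object and `M` an
object (with dual `N`) with nonzero Euler characteristic admitting an isomorphism
`u : M ≅ L ⊗ M^∨`, then `L` is a direct summand of `M ⊗ M`. -/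
theorem invertible_direct_summand_of_polarisation {C : Type*} [Category C]
    [MonoidalCategory C] [SymmetricCategory C] [Preadditive C]
    [CharZero (End (𝟙_ C))]
    (hfield : ∀ x : End (𝟙_ C), x ≠ 0 → IsUnit x)
    (M N L L' : C) [ExactPairing M N]
    (hL : L ⊗ L' ≅ 𝟙_ C) (hL' : L' ⊗ L ≅ 𝟙_ C)
    (u : M ≅ L ⊗ N)
    (hχ : η_ M N ≫ (β_ M N).hom ≫ ε_ M N ≠ 0) :
    ∃ (s : L ⟶ M ⊗ M) (r : M ⊗ M ⟶ L), s ≫ r = 𝟙 L :=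
  invertible_direct_summand_of_polarisation_general hfield M N L u hχ
end

section
/- Let K be a field, R a semisimple finite-dimensional K-algebra acting faithfully on a finite-dimensional K-vector space V, and let C be the centralizer of R in End_K(V). Then C is semisimple and the centralizer of C in End_K(V) equals R; in particular, the centers of C and R coincide. -/
open Submodule
set_option linter.unusedSectionVars false
set_option synthInstance.maxHeartbeats 400000
set_option maxHeartbeats 1600000

section Aux

variable {K V : Type*} [Field K] [AddCommGroup V] [Module K V]
variable {R : Subalgebra K (Module.End K V)}

/-- An `R`-linear endomorphism of `V` as a `K`-linear endomorphism. -/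
def DCT.toEnd (g : V →ₗ[R] V) : Module.End K V where
  toFun := g
  map_add' := g.map_add
  map_smul' k v := by
    have h : ∀ u : V, k • u = (algebraMap K R k) • u := fun u => by
      show _ = ((algebraMap K R k : R) : Module.End K V) u
      simp
    simp only [RingHom.id_apply, h, map_smul]

lemma DCT.toEnd_apply (g : V →ₗ[R] V) (v : V) : DCT.toEnd g v = g v := rfl

lemma DCT.toEnd_mem_centralizer (g : V →ₗ[R] V) :
    DCT.toEnd g ∈ Subalgebra.centralizer K (R : Set (Module.End K V)) := by
  rw [Subalgebra.mem_centralizer_iff]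
  intro r hr
  ext v
  exact (g.map_smul (⟨r, hr⟩ : R) v).symm

/-- A member of the centralizer of `R` as an `R`-linear endomorphism of `V`. -/
def DCT.ofCent (c : Module.End K V)
    (hc : c ∈ Subalgebra.centralizer K (R : Set (Module.End K V))) : V →ₗ[R] V where
  toFun := c
  map_add' := c.map_add
  map_smul' r v := by
    have := (Subalgebra.mem_centralizer_iff K).mp hc (r : Module.End K V) r.2
    exact congrFun (congrArg DFunLike.coe this.symm) v

end Aux

section Semisimple

variable {K V : Type*} [Field K] [AddCommGroup V] [Module K V]
variable {R : Subalgebra K (Module.End K V)}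

local notation "C" => Subalgebra.centralizer K (R : Set (Module.End K V))

/-- Key step: if `v` lies in a simple `R`-submodule and `c • v ≠ 0` for `c` in the
centralizer, then `v` can be recovered from `c • v` by the centralizer. -/
lemma DCT.exists_smul_eq [IsSemisimpleRing R] {m : Submodule R V} (hm : IsSimpleModule R m)
    {v : V} (hv : v ∈ m) (c : C) (hw : (c : Module.End K V) v ≠ 0) :
    ∃ c' : C, (c' : Module.End K V) ((c : Module.End K V) v) = v := by
  haveI := hm
  haveI : IsSemisimpleModule R V := inferInstance
  let ψ : m →ₗ[R] V := (DCT.ofCent (c : Module.End K V) c.2) ∘ₗ m.subtype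
  have hψv : ψ ⟨v, hv⟩ = (c : Module.End K V) v := rfl
  have hψ0 : ψ ≠ 0 := fun h => hw (by rw [← hψv, h]; rfl)
  have hinj : Function.Injective ψ := LinearMap.injective_of_ne_zero (R := R) (M := m) (N := V) hψ0
  let e : m ≃ₗ[R] LinearMap.range ψ := LinearEquiv.ofInjective ψ hinj
  obtain ⟨U, hU⟩ := exists_isCompl (LinearMap.range ψ)
  let p := (LinearMap.range ψ).projectionOnto U hU
  let g : V →ₗ[R] V := m.subtype ∘ₗ (e.symm : LinearMap.range ψ →ₗ[R] m) ∘ₗ p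
  refine ⟨⟨DCT.toEnd g, DCT.toEnd_mem_centralizer g⟩, ?_⟩
  show g ((c : Module.End K V) v) = v
  have h1 : (c : Module.End K V) v = ↑(e ⟨v, hv⟩) := by
    rw [← hψv]; rfl
  rw [h1]
  show m.subtype (e.symm (p ↑(e ⟨v, hv⟩))) = v
  rw [Submodule.linearProjOfIsCompl_apply_left hU, e.symm_apply_apply]
  rfl

lemma DCT.isAtom_span [IsSemisimpleRing R] {m : Submodule R V} (hm : IsSimpleModule R m)
    {v : V} (hv : v ∈ m) (hv0 : v ≠ 0) :
    IsAtom (span C {v}) := by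
  constructor
  · simpa [Submodule.span_singleton_eq_bot] using hv0
  · intro b hb
    by_contra hbne
    obtain ⟨w, hwb, hw0⟩ := Submodule.exists_mem_ne_zero_of_ne_bot hbne
    have hwspan : w ∈ span C {v} := hb.le hwb
    obtain ⟨c, hc⟩ := Submodule.mem_span_singleton.mp hwspan
    have hcv : (c : Module.End K V) v = w := hc
    have hw0' : (c : Module.End K V) v ≠ 0 := hcv ▸ hw0
    obtain ⟨c', hc'⟩ := DCT.exists_smul_eq hm hv c hw0'
    have hvb : v ∈ b := by
      have : c' • w ∈ b := Submodule.smul_mem b c' hwb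
      rwa [show c' • w = v from by rw [← hcv]; exact hc'] at this
    exact hb.ne (le_antisymm hb.le (Submodule.span_le.mpr (by simpa using hvb)))

/-- `V` is semisimple as a module over the centralizer. -/
lemma DCT.isSemisimpleModule_centralizer [IsSemisimpleRing R] :
    IsSemisimpleModule C V := by
  haveI : IsSemisimpleModule R V := inferInstance
  apply IsSemisimpleModule.of_sSup_simples_eq_top
  rw [eq_top_iff]
  intro x _
  have hx : x ∈ (⊤ : Submodule R V) := trivial
  rw [← IsSemisimpleModule.sSup_simples_eq_top R V, sSup_eq_iSup'] at hx
  have step : ∀ (i : {m : Submodule R V // IsSimpleModule R ↥m}) (y : V), y ∈ (i : Submodule R V) →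
      y ∈ sSup {p : Submodule ↥(Subalgebra.centralizer K (R : Set (Module.End K V))) V |
        IsSimpleModule ↥(Subalgebra.centralizer K (R : Set (Module.End K V))) ↥p} := by
    intro i y hy
    rcases eq_or_ne y 0 with rfl | hy0
    · exact zero_mem _
    · have hsimple : IsSimpleModule ↥(Subalgebra.centralizer K (R : Set (Module.End K V)))
          ↥(span ↥(Subalgebra.centralizer K (R : Set (Module.End K V))) {y}) := by
        rw [isSimpleModule_iff_isAtom]
        exact DCT.isAtom_span i.2 hy hy0
      have hle := le_sSup (s := {p : Submodule ↥(Subalgebra.centralizer K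
          (R : Set (Module.End K V))) V |
            IsSimpleModule ↥(Subalgebra.centralizer K (R : Set (Module.End K V))) ↥p}) hsimple
      exact hle (Submodule.mem_span_singleton_self y)
  exact @Submodule.iSup_induction _ _ _ _ _ _ _
    (fun z : V => z ∈ sSup {p : Submodule ↥(Subalgebra.centralizer K
      (R : Set (Module.End K V))) V |
        IsSimpleModule ↥(Subalgebra.centralizer K (R : Set (Module.End K V))) ↥p})
    x hx step (zero_mem _) (fun a b ha hb => add_mem ha hb)

end Semisimple

section Pi

variable {S M : Type*} [Ring S] [AddCommGroup M] [Module S M]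

open LinearMap in
lemma DCT.isSemisimpleModule_pi [IsSemisimpleModule S M] (n : ℕ) :
    IsSemisimpleModule S (Fin n → M) := by
  classical
  refine isSemisimpleModule_of_isSemisimpleModule_submodule'
    (p := fun i : Fin n => LinearMap.range (LinearMap.single S (fun _ : Fin n => M) i))
    (fun i => .range _) ?_
  simp_rw [range_eq_map, Submodule.iSup_map_single, Submodule.pi_top]

end Pi

section Main

variable {K V : Type*} [Field K] [AddCommGroup V] [Module K V] [FiniteDimensional K V]
variable {R : Subalgebra K (Module.End K V)}

local notation "C" => Subalgebra.centralizer K (R : Set (Module.End K V))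

lemma DCT.isSemisimpleRing_centralizer [IsSemisimpleRing R] :
    IsSemisimpleRing C := by
  haveI : IsSemisimpleModule C V := DCT.isSemisimpleModule_centralizer
  haveI : IsSemisimpleModule C (Fin (Module.finrank K V) → V) := DCT.isSemisimpleModule_pi (S := ↥C) (M := V) _
  let b := Module.finBasis K V
  let Θ : C →ₗ[C] (Fin (Module.finrank K V) → V) :=
    { toFun := fun c i => (c : Module.End K V) (b i)
      map_add' := fun c c' => by ext i; rfl
      map_smul' := fun c c' => by ext i; rfl }
  have hΘ : Function.Injective Θ := by
    intro c c' h
    ext1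
    apply b.ext
    intro i
    exact congrFun h i
  exact IsSemisimpleModule.congr (M := ↥(LinearMap.range Θ)) (LinearEquiv.ofInjective Θ hΘ)

lemma DCT.centralizer_centralizer [IsSemisimpleRing R] :
    Subalgebra.centralizer K ((C : Subalgebra K (Module.End K V)) : Set (Module.End K V)) = R := by
  classical
  apply le_antisymm
  · intro f hf
    rw [Subalgebra.mem_centralizer_iff] at hf
    set n := Module.finrank K V
    let b := Module.finBasis K V
    haveI : IsSemisimpleModule R (Fin n → V) := DCT.isSemisimpleModule_pi _
    set w : Fin n → V := fun i => b i with hw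
    obtain ⟨U, hU⟩ := exists_isCompl (span R {w})
    let π : (Fin n → V) →ₗ[R] (Fin n → V) :=
      (span R {w}).subtype ∘ₗ (span R {w}).linearProjOfIsCompl U hU
    have hπw : π w = w :=
      congrArg Subtype.val (Submodule.linearProjOfIsCompl_apply_left hU
        ⟨w, Submodule.mem_span_singleton_self w⟩)
    have hπmem : ∀ x, π x ∈ span R {w} := fun x => Submodule.coe_mem _
    let ρ : Fin n → Fin n → (V →ₗ[R] V) := fun i j =>
      (LinearMap.proj i) ∘ₗ π ∘ₗ (LinearMap.single R (fun _ : Fin n => V) j)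
    let φ : Fin n → Fin n → Module.End K V := fun i j => DCT.toEnd (ρ i j)
    have hφC : ∀ i j, φ i j ∈ C := fun i j => DCT.toEnd_mem_centralizer _
    have hπ_eq : ∀ (x : Fin n → V) (i : Fin n), π x i = ∑ j, φ i j (x j) := by
      intro x i
      conv_lhs => rw [← Finset.univ_sum_single x]
      rw [map_sum, Finset.sum_apply]
      rfl
    have hcomm : ∀ i j (u : V), φ i j (f u) = f (φ i j u) := by
      intro i j u
      have := hf (φ i j) (hφC i j)
      exact congrFun (congrArg DFunLike.coe this) u
    have hfw : (fun i => f (w i)) ∈ span R {w} := by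
      have : π (fun i => f (w i)) = fun i => f (w i) := by
        funext i
        rw [hπ_eq]
        simp_rw [hcomm]
        rw [← map_sum, ← hπ_eq, hπw]
      rw [← this]
      exact hπmem _
    obtain ⟨r, hr⟩ := Submodule.mem_span_singleton.mp hfw
    have : f = (r : Module.End K V) := by
      apply b.ext
      intro i
      have := congrFun hr i
      exact this.symm
    rw [this]
    exact r.2
  · intro r hr
    rw [Subalgebra.mem_centralizer_iff]
    intro c hc
    exact ((Subalgebra.mem_centralizer_iff K).mp hc r hr).symm

lemma DCT.center_map (S : Subalgebra K (Module.End K V)) :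
    (Subalgebra.center K S).map S.val = S ⊓ Subalgebra.centralizer K (S : Set (Module.End K V)) := by
  ext x
  simp only [Subalgebra.mem_map,  Subalgebra.mem_centralizer_iff,
    Subalgebra.mem_center_iff]
  constructor
  · rintro ⟨y, hy, rfl⟩
    exact ⟨y.2, fun g hg => congrArg (Subalgebra.val S) (hy ⟨g, hg⟩)⟩
  · rintro ⟨hxS, hx⟩
    exact ⟨⟨x, hxS⟩, fun b => Subtype.ext (hx b b.2), rfl⟩

end Main

/-- The double centralizer theorem (Bourbaki, Algèbre VIII §14 no 5, th. 5 a)), as used in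
Proposition 5.2 (vi) of "Chow-Lefschetz motives": if `R` is a semisimple subalgebra of
the endomorphism algebra of a finite-dimensional `K`-vector space `V` (so `R` acts
faithfully on `V`), then its centralizer `C` is semisimple, the centralizer of `C` is
`R` itself, and in particular the centers of `C` and `R` coincide. -/
theorem double_centralizer (K V : Type*) [Field K] [AddCommGroup V] [Module K V]
    [FiniteDimensional K V] (R : Subalgebra K (Module.End K V))
    (hR : IsSemisimpleRing R) :
    IsSemisimpleRing (Subalgebra.centralizer K (R : Set (Module.End K V))) ∧
    Subalgebra.centralizer K
        ((Subalgebra.centralizer K (R : Set (Module.End K V)) : Subalgebra K (Module.End K V)) :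
          Set (Module.End K V)) = R ∧
    (Subalgebra.center K
          (Subalgebra.centralizer K (R : Set (Module.End K V)))).map
        (Subalgebra.centralizer K (R : Set (Module.End K V))).val =
      (Subalgebra.center K R).map R.val := by
  haveI := hR
  have h2 := DCT.centralizer_centralizer (R := R)
  refine ⟨DCT.isSemisimpleRing_centralizer, h2, ?_⟩
  rw [DCT.center_map, DCT.center_map, h2, inf_comm]
end

section
/- Let A be a semisimple Q-linear abelian category, Γ a finite group acting on A by tensor auto-equivalences, and B the category of Γ-descent data in A. Then B is semisimple: every object of B is a direct sum of simple objects. -/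
open CategoryTheory CategoryTheory.Limits

universe v u

variable {C : Type u} [Category.{v} C] [Abelian C] [HasFiniteBiproducts C]

/-- Peel off one summand of a finite biproduct. -/
noncomputable def biprodSuccAbove {n : ℕ} (S : Fin (n+1) → C) (p : Fin (n+1)) :
    (⨁ S) ≅ S p ⊞ (⨁ fun j : Fin n => S (p.succAbove j)) where
  hom := biprod.lift (biproduct.π S p) (biproduct.lift fun j => biproduct.π S (p.succAbove j))
  inv := biprod.desc (biproduct.ι S p) (biproduct.desc fun j => biproduct.ι S (p.succAbove j))
  hom_inv_id := by
    rw [biprod.lift_desc, biproduct.lift_desc, ← biproduct.total,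
      Fin.sum_univ_succAbove (fun i => biproduct.π S i ≫ biproduct.ι S i) p]
  inv_hom_id := by
    ext j
    · simp
    · simp [biproduct.ι_π_ne _ (Fin.succAbove_ne p j).symm]
    · simp [biproduct.ι_π_ne _ (Fin.succAbove_ne p j)]
    · simp [biproduct.ι_π, Fin.succAbove_right_injective.eq_iff]

lemma isZero_of_mono_zero {X Y : C} (f : X ⟶ Y) [Mono f] (hf : f = 0) : IsZero X := by
  rw [IsZero.iff_id_eq_zero, ← cancel_mono f, hf]
  simp

lemma isZero_biproduct_empty (S : Fin 0 → C) : IsZero (⨁ S) := by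
  rw [IsZero.iff_id_eq_zero, ← biproduct.total]
  simp

section Split

variable {X A Y : C}

lemma split_binary_step [Simple A] (f : X ⟶ A ⊞ Y) [Mono f]
    (IH : ∀ (Z : C) (g : Z ⟶ Y), Mono g → ∃ r, g ≫ r = 𝟙 Z) :
    ∃ r : A ⊞ Y ⟶ X, f ≫ r = 𝟙 X := by
  classical
  obtain ⟨q, hq⟩ : ∃ q : X ⟶ Y, q = f ≫ biprod.snd := ⟨_, rfl⟩
  obtain ⟨k, hk⟩ : ∃ k : kernel q ⟶ X, k = kernel.ι q := ⟨_, rfl⟩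
  obtain ⟨a, ha⟩ : ∃ a : kernel q ⟶ A, a = k ≫ f ≫ biprod.fst := ⟨_, rfl⟩
  haveI : Mono k := by rw [hk]; infer_instance
  have h1 : k ≫ f ≫ biprod.snd = 0 := by rw [hk, ← hq]; exact kernel.condition q
  have hkf : k ≫ f = a ≫ biprod.inl := by
    apply biprod.hom_ext
    · simp [ha]
    · simp only [Category.assoc, biprod.inl_snd, comp_zero, h1]
  by_cases hcase : a = 0
  · -- q is mono, use induction directly
    have hk0 : k = 0 := by
      have : k ≫ f = 0 := by rw [hkf, hcase, zero_comp]
      rwa [← cancel_mono f, zero_comp]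
    haveI : Mono q := by
      apply Preadditive.mono_of_cancel_zero
      intro W g hg
      have : g = kernel.lift q g hg ≫ k := by rw [hk]; exact (kernel.lift_ι q g hg).symm
      rw [this, hk0, comp_zero]
    obtain ⟨r', hr'⟩ := IH X q this
    refine ⟨biprod.snd ≫ r', ?_⟩
    rw [← Category.assoc, ← hq, hr']
  · haveI : Mono a := by
      have : Mono (a ≫ (biprod.inl : A ⟶ A ⊞ Y)) := by rw [← hkf]; exact mono_comp _ _
      exact mono_of_mono a (biprod.inl : A ⟶ A ⊞ Y)
    haveI : IsIso a := isIso_of_mono_of_nonzero hcase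
    obtain ⟨b, hb⟩ : ∃ b : A ⟶ X, b = inv a ≫ k := ⟨_, rfl⟩
    have hbf : b ≫ f = biprod.inl := by rw [hb, Category.assoc, hkf, IsIso.inv_hom_id_assoc]
    obtain ⟨p, hp⟩ : ∃ p : X ⟶ A, p = f ≫ biprod.fst := ⟨_, rfl⟩
    have hbp : b ≫ p = 𝟙 A := by rw [hp, ← Category.assoc, hbf, biprod.inl_fst]
    haveI : Mono b := by
      have : Mono (b ≫ f) := by rw [hbf]; infer_instance
      exact mono_of_mono b f
    obtain ⟨e, he⟩ : ∃ e : X ⟶ X, e = p ≫ b := ⟨_, rfl⟩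
    have hee : e ≫ e = e := by
      rw [he, Category.assoc, ← Category.assoc b p, hbp, Category.id_comp]
    have hsub : (𝟙 X - e) ≫ e = 0 := by
      rw [Preadditive.sub_comp, Category.id_comp, hee, sub_self]
    obtain ⟨k₂, hk₂⟩ : ∃ k₂ : kernel e ⟶ X, k₂ = kernel.ι e := ⟨_, rfl⟩
    obtain ⟨π₂, hπ₂⟩ : ∃ π₂ : X ⟶ kernel e, π₂ = kernel.lift e (𝟙 X - e) hsub := ⟨_, rfl⟩
    haveI : Mono k₂ := by rw [hk₂]; infer_instance
    have hπk : π₂ ≫ k₂ = 𝟙 X - e := by subst hπ₂ hk₂; exact kernel.lift_ι e _ hsub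
    have hke : k₂ ≫ e = 0 := by rw [hk₂]; exact kernel.condition e
    have hkp : k₂ ≫ p = 0 := by
      rw [← cancel_mono b, Category.assoc, ← he, hke, zero_comp]
    obtain ⟨q₂, hq₂⟩ : ∃ q₂ : kernel e ⟶ Y, q₂ = k₂ ≫ q := ⟨_, rfl⟩
    have hkf₂ : k₂ ≫ f = q₂ ≫ biprod.inr := by
      apply biprod.hom_ext
      · rw [Category.assoc, ← hp, hkp, Category.assoc, biprod.inr_fst, comp_zero]
      · rw [Category.assoc, ← hq, ← hq₂, Category.assoc, biprod.inr_snd, Category.comp_id]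
    haveI : Mono q₂ := by
      have : Mono (q₂ ≫ (biprod.inr : Y ⟶ A ⊞ Y)) := by rw [← hkf₂]; exact mono_comp _ _
      exact mono_of_mono q₂ (biprod.inr : Y ⟶ A ⊞ Y)
    obtain ⟨r₂, hr₂⟩ := IH (kernel e) q₂ this
    refine ⟨biprod.desc b (r₂ ≫ k₂), ?_⟩
    have hbq : b ≫ q = 0 := by rw [hq, ← Category.assoc, hbf, biprod.inl_snd]
    have hqdec : q = π₂ ≫ q₂ := by
      calc q = (e + (𝟙 X - e)) ≫ q := by rw [add_sub_cancel, Category.id_comp]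
        _ = π₂ ≫ q₂ := by
            have h2 : e ≫ q = 0 := by rw [he, Category.assoc, hbq, comp_zero]
            rw [Preadditive.add_comp, h2, zero_add, ← hπk, Category.assoc, ← hq₂]
    calc f ≫ biprod.desc b (r₂ ≫ k₂)
        = (f ≫ biprod.fst) ≫ b + (f ≫ biprod.snd) ≫ (r₂ ≫ k₂) := by
          rw [biprod.desc_eq, Preadditive.comp_add, ← Category.assoc, ← Category.assoc]
      _ = 𝟙 X := by
          rw [← hp, ← hq, ← he, hqdec, Category.assoc, ← Category.assoc q₂ r₂, hr₂,
            Category.id_comp, hπk]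
          abel

/-- Monomorphisms into a finite biproduct of simple objects split. -/
lemma mono_into_simples_splits : ∀ (n : ℕ) (S : Fin n → C), (∀ i, Simple (S i)) →
    ∀ (X : C) (f : X ⟶ ⨁ S), Mono f → ∃ r : (⨁ S) ⟶ X, f ≫ r = 𝟙 X := by
  intro n
  induction n with
  | zero =>
    intro S _ Z f hf
    refine ⟨0, ?_⟩
    have hz : IsZero Z := by
      have : f = 0 := (isZero_biproduct_empty S).eq_of_tgt f 0
      exact isZero_of_mono_zero f this
    rw [comp_zero, ← hz.eq_of_src (𝟙 Z) 0]
  | succ n IH =>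
    intro S hS Z f₀ hf₀
    haveI := hS 0
    have hmono : Mono (f₀ ≫ (biprodSuccAbove S 0).hom) := mono_comp _ _
    obtain ⟨r', hr'⟩ := split_binary_step (A := S 0) (f₀ ≫ (biprodSuccAbove S 0).hom)
      (IH (fun j => S ((0 : Fin (n+1)).succAbove j)) (fun j => hS _))
    exact ⟨(biprodSuccAbove S 0).hom ≫ r', by rw [← Category.assoc]; exact hr'⟩

end Split

section Count

lemma card_eq_of_iso_simples : ∀ (n : ℕ) (S : Fin n → C), (∀ i, Simple (S i)) →
    ∀ (m : ℕ) (T : Fin m → C), (∀ j, Simple (T j)) → ((⨁ S) ≅ ⨁ T) → n = m := by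
  have key : ∀ (m : ℕ) (T : Fin m → C), (∀ j, Simple (T j)) → IsZero (⨁ T) → m = 0 := by
    intro m T hT hz
    cases m with
    | zero => rfl
    | succ m =>
      exfalso
      haveI := hT 0
      apply id_nonzero (T 0)
      have : biproduct.ι T 0 ≫ biproduct.π T 0 = 𝟙 (T 0) := biproduct.ι_π_self T 0
      rw [← this, ← Category.id_comp (biproduct.π T 0), ← Category.assoc,
        ← Category.comp_id (biproduct.ι T 0), hz.eq_of_tgt (𝟙 (⨁ T)) 0]
      simp
  intro n
  induction n with
  | zero =>
    intro S hS m T hT e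
    exact (key m T hT ((isZero_biproduct_empty S).of_iso e.symm)).symm
  | succ n IH =>
    intro S hS m T hT e
    haveI := hS; haveI := hT
    cases m with
    | zero =>
      exact key (n+1) S hS ((isZero_biproduct_empty T).of_iso e)
    | succ m =>
      -- find a nonzero matrix entry in the first row
      have hι : biproduct.ι S 0 ≫ e.hom ≠ 0 := by
        intro h
        have h0 : biproduct.ι S 0 = 0 := by
          rw [← Category.comp_id (biproduct.ι S 0), ← e.hom_inv_id, ← Category.assoc, h,
            zero_comp]
        apply id_nonzero (S 0)
        rw [← biproduct.ι_π_self S 0, h0, zero_comp]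
      obtain ⟨i, hi⟩ : ∃ i, biproduct.ι S 0 ≫ e.hom ≫ biproduct.π T i ≠ 0 := by
        by_contra h
        push_neg at h
        exact hι (biproduct.hom_ext _ _ fun j => by
          rw [Category.assoc, h j, zero_comp])
      haveI : IsIso (biproduct.ι S 0 ≫ e.hom ≫ biproduct.π T i) := isIso_of_hom_simple hi
      -- eliminate one summand on each side
      have hentry : biprod.inl ≫ ((biprodSuccAbove S 0).symm ≪≫ e ≪≫ biprodSuccAbove T i).hom
          ≫ biprod.fst = biproduct.ι S 0 ≫ e.hom ≫ biproduct.π T i := by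
        rw [Iso.trans_hom, Iso.trans_hom, Iso.symm_hom]
        simp only [biprodSuccAbove, Category.assoc, biprod.lift_fst, biprod.inl_desc_assoc]
      haveI : IsIso (biprod.inl ≫ ((biprodSuccAbove S 0).symm ≪≫ e ≪≫
          biprodSuccAbove T i).hom ≫ biprod.fst) := by rw [hentry]; infer_instance
      have e' := Biprod.isoElim ((biprodSuccAbove S 0).symm ≪≫ e ≪≫ biprodSuccAbove T i)
      have := IH (fun j => S ((0 : Fin (n+1)).succAbove j)) (fun j => hS _)
        m (fun j => T (i.succAbove j)) (fun j => hT _) e'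
      omega

end Count

section SumIso

variable {J K : Type} [Fintype J] [Fintype K] [DecidableEq J] [DecidableEq K]

noncomputable def biproductSumIso (f : J → C) (g : K → C) :
    (⨁ Sum.elim f g) ≅ (⨁ f) ⊞ (⨁ g) where
  hom := biprod.lift (biproduct.lift fun j => biproduct.π (Sum.elim f g) (Sum.inl j))
    (biproduct.lift fun k => biproduct.π (Sum.elim f g) (Sum.inr k))
  inv := biprod.desc (biproduct.desc fun j => biproduct.ι (Sum.elim f g) (Sum.inl j))
    (biproduct.desc fun k => biproduct.ι (Sum.elim f g) (Sum.inr k))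
  hom_inv_id := by
    rw [biprod.lift_desc]
    erw [biproduct.lift_desc, biproduct.lift_desc]
    rw [← biproduct.total]
    exact (Fintype.sum_sum_type (fun x => biproduct.π (Sum.elim f g) x ≫ biproduct.ι (Sum.elim f g) x)).symm
  inv_hom_id := by
    have h1 : ∀ j, biproduct.ι f j ≫ (biproduct.desc fun j => biproduct.ι (Sum.elim f g) (Sum.inl j)) = biproduct.ι (Sum.elim f g) (Sum.inl j) := fun j => biproduct.ι_desc _ _
    have h2 : ∀ j, biproduct.ι g j ≫ (biproduct.desc fun k => biproduct.ι (Sum.elim f g) (Sum.inr k)) = biproduct.ι (Sum.elim f g) (Sum.inr j) := fun j => biproduct.ι_desc _ _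
    have h3 : ∀ j, (biproduct.lift fun j => biproduct.π (Sum.elim f g) (Sum.inl j)) ≫ biproduct.π f j = biproduct.π (Sum.elim f g) (Sum.inl j) := fun j => biproduct.lift_π _ _
    have h4 : ∀ j, (biproduct.lift fun k => biproduct.π (Sum.elim f g) (Sum.inr k)) ≫ biproduct.π g j = biproduct.π (Sum.elim f g) (Sum.inr j) := fun j => biproduct.lift_π _ _
    ext x y
    · simp only [Category.assoc, biprod.inl_desc_assoc, biprod.lift_fst_assoc, Category.id_comp, biprod.inl_fst_assoc]
      erw [reassoc_of% h1, h3]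
      by_cases hxy : x = y
      · subst hxy
        exact (biproduct.ι_π_self (Sum.elim f g) (Sum.inl x)).trans (biproduct.ι_π_self f x).symm
      · exact (biproduct.ι_π_ne (Sum.elim f g) (j := Sum.inl x) (j' := Sum.inl y)
          (by simpa using hxy)).trans (biproduct.ι_π_ne f hxy).symm
    · simp only [Category.assoc, biprod.inl_desc_assoc, biprod.lift_snd_assoc, Category.id_comp, biprod.inl_snd_assoc]
      erw [reassoc_of% h1, h4]
      exact (biproduct.ι_π_ne _ Sum.inl_ne_inr).trans (by simp; rfl)
    · simp only [Category.assoc, biprod.inr_desc_assoc, biprod.lift_fst_assoc, Category.id_comp, biprod.inr_fst_assoc]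
      erw [reassoc_of% h2, h3]
      exact (biproduct.ι_π_ne _ Sum.inr_ne_inl).trans (by simp; rfl)
    · simp only [Category.assoc, biprod.inr_desc_assoc, biprod.lift_snd_assoc, Category.id_comp, biprod.inr_snd_assoc]
      erw [reassoc_of% h2, h4]
      by_cases hxy : x = y
      · subst hxy
        exact (biproduct.ι_π_self (Sum.elim f g) (Sum.inr x)).trans (biproduct.ι_π_self g x).symm
      · exact (biproduct.ι_π_ne (Sum.elim f g) (j := Sum.inr x) (j' := Sum.inr y)
          (by simpa using hxy)).trans (biproduct.ι_π_ne g hxy).symm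

end SumIso

lemma card_eq_of_binary_decomp {n k m : ℕ} (S : Fin n → C) (hS : ∀ i, Simple (S i))
    {X Y : C} (e : (⨁ S) ≅ X ⊞ Y)
    (S1 : Fin k → C) (hS1 : ∀ i, Simple (S1 i)) (eX : X ≅ ⨁ S1)
    (S2 : Fin m → C) (hS2 : ∀ i, Simple (S2 i)) (eY : Y ≅ ⨁ S2) : n = k + m := by
  classical
  set A : Fin (k + m) → C := fun x => Sum.elim S1 S2 (finSumFinEquiv.symm x) with hA
  have hsimp : ∀ x, Simple (A x) := by
    intro x
    rcases hx : finSumFinEquiv.symm x with i | i <;> · rw [hA]; dsimp only; rw [hx]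
                                                       first | exact hS1 i | exact hS2 i
  have w : ∀ x : Fin (k+m), Sum.elim S1 S2 (finSumFinEquiv.symm x) ≅ A x := fun x => Iso.refl _
  have eA : (⨁ A) ≅ ⨁ Sum.elim S1 S2 := biproduct.whiskerEquiv finSumFinEquiv.symm w
  exact card_eq_of_iso_simples n S hS (k+m) A hsimp
    (e ≪≫ biprod.mapIso eX eY ≪≫ (biproductSumIso S1 S2).symm ≪≫ eA.symm)

/-- Build a binary biproduct iso from splitting data. -/
noncomputable def binaryDecompIso {N X Y : C} (f : X ⟶ N) (r : N ⟶ X) (s : Y ⟶ N) (t : N ⟶ Y)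
    (hfr : f ≫ r = 𝟙 X) (hst : s ≫ t = 𝟙 Y) (hft : f ≫ t = 0) (hsr : s ≫ r = 0)
    (htot : r ≫ f + t ≫ s = 𝟙 N) : N ≅ X ⊞ Y where
  hom := biprod.lift r t
  inv := biprod.desc f s
  hom_inv_id := by rw [biprod.lift_desc, htot]
  inv_hom_id := by
    ext <;> simp [hfr, hft, hsr, hst]

/-- A descent datum for a strict action `F` of a group `Γ` on a category `C`:
an object `M` with isomorphisms `u_g : M ≅ g_* M` satisfying the cocycle condition
`u_{gh} = g_*(u_h) ∘ u_g`. -/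
structure DescentDatum {C : Type u} [Category.{v} C] (Γ : Type*) [Group Γ]
    (F : Γ → C ⥤ C) (hmul : ∀ g h, F (g * h) = F h ⋙ F g) where
  M : C
  u : ∀ g : Γ, M ≅ (F g).obj M
  cocycle : ∀ g h, (u (g * h)).hom = (u g).hom ≫ (F g).map (u h).hom ≫
    eqToHom (congrArg (fun T : C ⥤ C => T.obj M) (hmul g h)).symm

/-- A morphism of the underlying objects is a morphism of descent data if it commutes
with the descent isomorphisms. -/
def DescentDatum.IsHom {C : Type u} [Category.{v} C] {Γ : Type*} [Group Γ]
    {F : Γ → C ⥤ C} {hmul : ∀ g h, F (g * h) = F h ⋙ F g}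
    (N N' : DescentDatum Γ F hmul) (f : N.M ⟶ N'.M) : Prop :=
  ∀ g : Γ, f ≫ (N'.u g).hom = (N.u g).hom ≫ (F g).map f

/-- A descent datum is simple if its underlying object is nonzero and every nonzero
subdatum of it is all of it. -/
def DescentDatum.IsSimple {C : Type u} [Category.{v} C] [Limits.HasZeroMorphisms C]
    {Γ : Type*} [Group Γ]
    {F : Γ → C ⥤ C} {hmul : ∀ g h, F (g * h) = F h ⋙ F g}
    (N : DescentDatum Γ F hmul) : Prop :=
  ¬ IsZero N.M ∧ ∀ (T : DescentDatum Γ F hmul) (f : T.M ⟶ N.M),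
    DescentDatum.IsHom T N f → Mono f → (IsZero T.M ∨ IsIso f)

namespace DescentDatum

variable {Γ : Type*} [Group Γ] {F : Γ → C ⥤ C} {hmul : ∀ g h, F (g * h) = F h ⋙ F g}

lemma IsHom.comp {X Y Z : DescentDatum Γ F hmul} {a : X.M ⟶ Y.M} {b : Y.M ⟶ Z.M}
    (ha : IsHom X Y a) (hb : IsHom Y Z b) : IsHom X Z (a ≫ b) := by
  intro g
  rw [Category.assoc, hb g, ← Category.assoc, ha g, Category.assoc, ← Functor.map_comp]

lemma IsHom.id (X : DescentDatum Γ F hmul) : IsHom X X (𝟙 X.M) := by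
  intro g; simp

lemma cocycle_hom (X : DescentDatum Γ F hmul) (g h : Γ) :
    (X.u g).hom ≫ (F g).map (X.u h).hom = (X.u (g * h)).hom ≫
      eqToHom (congrArg (fun T : C ⥤ C => T.obj X.M) (hmul g h)) := by
  rw [X.cocycle g h]
  simp [eqToHom_trans]

lemma cocycle_inv (X : DescentDatum Γ F hmul) (g h : Γ) :
    (X.u (g * h)).inv = eqToHom (congrArg (fun T : C ⥤ C => T.obj X.M) (hmul g h)) ≫
      (F g).map (X.u h).inv ≫ (X.u g).inv := by
  apply Iso.inv_ext
  rw [X.cocycle g h]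
  simp [eqToHom_trans]

end DescentDatum

namespace DescentDatum

variable {Γ : Type*} [Group Γ] {F : Γ → C ⥤ C} {hmul : ∀ g h, F (g * h) = F h ⋙ F g}

lemma conj_eq (N T : DescentDatum Γ F hmul) (r₀ : N.M ⟶ T.M) (h g : Γ) :
    (N.u h).hom ≫ (F h).map ((N.u g).hom ≫ (F g).map r₀ ≫ (T.u g).inv) =
      ((N.u (h * g)).hom ≫ (F (h * g)).map r₀ ≫ (T.u (h * g)).inv) ≫ (T.u h).hom := by
  have e1 := cocycle_hom N h g
  have e2 := cocycle_inv T h g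
  have e3 := Functor.congr_hom (hmul h g) r₀
  simp only [Functor.map_comp, e2, e3, Functor.comp_map, Category.assoc, Iso.inv_hom_id,
    Category.comp_id, eqToHom_trans, eqToHom_refl, Category.id_comp]
  rw [reassoc_of% e1]
  simp only [eqToHom_trans_assoc, eqToHom_refl, Category.id_comp, Category.assoc,
    Iso.inv_hom_id, Category.comp_id]

lemma exists_equivariant_retraction [Fintype Γ] [Linear ℚ C] (hadd : ∀ g, (F g).Additive)
    (N T : DescentDatum Γ F hmul) (f : T.M ⟶ N.M) (hf : IsHom T N f)
    (r₀ : N.M ⟶ T.M) (hr₀ : f ≫ r₀ = 𝟙 T.M) :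
    ∃ r : N.M ⟶ T.M, IsHom N T r ∧ f ≫ r = 𝟙 T.M := by
  set c : Γ → (N.M ⟶ T.M) := fun g => (N.u g).hom ≫ (F g).map r₀ ≫ (T.u g).inv with hc
  have hfc : ∀ g, f ≫ c g = 𝟙 T.M := by
    intro g
    rw [hc]
    dsimp only
    rw [← Category.assoc, hf g, Category.assoc, ← Functor.map_comp_assoc, hr₀,
      CategoryTheory.Functor.map_id, Category.id_comp, Iso.hom_inv_id]
  refine ⟨((Fintype.card Γ : ℚ)⁻¹) • ∑ g, c g, ?_, ?_⟩
  · intro h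
    haveI := hadd h
    rw [Linear.smul_comp, Functor.map_smul, Linear.comp_smul]
    congr 1
    rw [Functor.map_sum, Preadditive.comp_sum, Preadditive.sum_comp]
    rw [← Fintype.sum_equiv (Equiv.mulLeft h) (fun g => c (h * g) ≫ (T.u h).hom)
      (fun g => c g ≫ (T.u h).hom) (fun g => rfl)]
    exact Finset.sum_congr rfl fun g _ => (conj_eq N T r₀ h g).symm
  · rw [Linear.comp_smul, Preadditive.comp_sum]
    simp only [hfc]
    rw [Finset.sum_const, Finset.card_univ, ← Nat.cast_smul_eq_nsmul ℚ, smul_smul,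
      inv_mul_cancel₀ (by exact_mod_cast Fintype.card_ne_zero), one_smul]

end DescentDatum

namespace DescentDatum

section Compl

variable {Γ : Type*} [Group Γ] {F : Γ → C ⥤ C} {hmul : ∀ g h, F (g * h) = F h ⋙ F g}
variable (N : DescentDatum Γ F hmul) (e : N.M ⟶ N.M)

lemma sub_cond (hee : e ≫ e = e) : (𝟙 N.M - e) ≫ e = 0 := by
  rw [Preadditive.sub_comp, Category.id_comp, hee, sub_self]

/-- The inclusion of the kernel of an idempotent. -/
noncomputable abbrev kerI : kernel e ⟶ N.M := kernel.ι e

/-- The projection onto the kernel of an idempotent. -/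
noncomputable abbrev kerP (hee : e ≫ e = e) : N.M ⟶ kernel e :=
  kernel.lift e (𝟙 N.M - e) (sub_cond N e hee)

variable (hee : e ≫ e = e)

lemma kerP_kerI : kerP N e hee ≫ kerI N e = 𝟙 N.M - e := kernel.lift_ι e _ _

lemma kerI_e : kerI N e ≫ e = 0 := kernel.condition e

lemma kerI_sub : kerI N e ≫ (𝟙 N.M - e) = kerI N e := by
  rw [Preadditive.comp_sub, Category.comp_id, kerI_e, sub_zero]

lemma kerI_kerP : kerI N e ≫ kerP N e hee = 𝟙 (kernel e) := by
  rw [← cancel_mono (kerI N e), Category.assoc, kerP_kerI, Category.id_comp, kerI_sub]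

lemma sub_kerP : (𝟙 N.M - e) ≫ kerP N e hee = kerP N e hee := by
  have h2 : (𝟙 N.M - e) ≫ (𝟙 N.M - e) = 𝟙 N.M - e := by
    simp [Preadditive.sub_comp, Preadditive.comp_sub, hee]
  rw [← cancel_mono (kerI N e), Category.assoc, kerP_kerI, h2]

lemma u_comm_sub (hadd : ∀ g, (F g).Additive) (heq : IsHom N N e) (g : Γ) :
    (N.u g).hom ≫ (F g).map (𝟙 N.M - e) = (𝟙 N.M - e) ≫ (N.u g).hom := by
  haveI := hadd g
  rw [Functor.map_sub, CategoryTheory.Functor.map_id, Preadditive.comp_sub,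
    Preadditive.sub_comp, Category.comp_id, Category.id_comp, ← heq g]

/-- The descent datum structure on the kernel of an equivariant idempotent. -/
noncomputable def complDatum (hadd : ∀ g, (F g).Additive) (heq : IsHom N N e) :
    DescentDatum Γ F hmul where
  M := kernel e
  u g :=
    { hom := kerI N e ≫ (N.u g).hom ≫ (F g).map (kerP N e hee)
      inv := (F g).map (kerI N e) ≫ (N.u g).inv ≫ kerP N e hee
      hom_inv_id := by
        haveI := hadd g
        rw [Category.assoc, Category.assoc, ← Functor.map_comp_assoc, kerP_kerI,
          ← Category.assoc ((N.u g).hom), u_comm_sub N e hadd heq g, Category.assoc,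
          Iso.hom_inv_id_assoc, ← Category.assoc, kerI_sub, kerI_kerP]
      inv_hom_id := by
        haveI := hadd g
        simp only [Category.assoc]
        rw [← Category.assoc (kerP N e hee), kerP_kerI,
          reassoc_of% (u_comm_sub N e hadd heq g).symm]
        rw [Iso.inv_hom_id_assoc, ← Functor.map_comp, sub_kerP, ← Functor.map_comp,
          kerI_kerP, CategoryTheory.Functor.map_id]
      }
  cocycle := by
    intro g h
    haveI := hadd g
    dsimp only
    simp only [Functor.map_comp, Category.assoc]
    rw [← Functor.map_comp_assoc, kerP_kerI, reassoc_of% (u_comm_sub N e hadd heq g),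
      reassoc_of% (kerI_sub N e), reassoc_of% (cocycle_hom N g h),
      Functor.congr_hom (hmul g h) (kerP N e hee)]
    simp only [Functor.comp_map, Category.assoc, eqToHom_trans, eqToHom_refl,
      Category.comp_id, eqToHom_trans_assoc, Category.id_comp]

lemma kerI_isHom (hadd : ∀ g, (F g).Additive) (heq : IsHom N N e) :
    IsHom (complDatum N e hee hadd heq) N (kerI N e) := by
  intro g
  show kerI N e ≫ (N.u g).hom =
    (kerI N e ≫ (N.u g).hom ≫ (F g).map (kerP N e hee)) ≫ (F g).map (kerI N e)
  rw [Category.assoc, Category.assoc, ← Functor.map_comp, kerP_kerI,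
    u_comm_sub N e hadd heq g, ← Category.assoc, kerI_sub]

lemma kerP_isHom (hadd : ∀ g, (F g).Additive) (heq : IsHom N N e) :
    IsHom N (complDatum N e hee hadd heq) (kerP N e hee) := by
  intro g
  show kerP N e hee ≫ kerI N e ≫ (N.u g).hom ≫ (F g).map (kerP N e hee) =
    (N.u g).hom ≫ (F g).map (kerP N e hee)
  rw [← Category.assoc, kerP_kerI, ← Category.assoc, ← u_comm_sub N e hadd heq g,
    Category.assoc, ← Functor.map_comp, sub_kerP]

end Compl

end DescentDatum

namespace DescentDatum

variable {Γ : Type*} [Group Γ] {F : Γ → C ⥤ C} {hmul : ∀ g h, F (g * h) = F h ⋙ F g}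

/-- The statement that a descent datum is a biproduct of simple descent data. -/
def HasDecomp (N : DescentDatum Γ F hmul) : Prop :=
  ∃ (n : ℕ) (T : Fin n → DescentDatum Γ F hmul),
    (∀ i, (T i).IsSimple) ∧
    ∃ (ι : ∀ i, (T i).M ⟶ N.M) (π : ∀ i, N.M ⟶ (T i).M),
      (∀ i, DescentDatum.IsHom (T i) N (ι i)) ∧
      (∀ i, DescentDatum.IsHom N (T i) (π i)) ∧
      (∀ i, ι i ≫ π i = 𝟙 ((T i).M)) ∧
      (∀ i j, i ≠ j → ι i ≫ π j = 0) ∧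
      (∑ i, π i ≫ ι i) = 𝟙 N.M

lemma hasDecomp_of_split (N T P : DescentDatum Γ F hmul)
    (f : T.M ⟶ N.M) (r : N.M ⟶ T.M) (s : P.M ⟶ N.M) (t : N.M ⟶ P.M)
    (hf : IsHom T N f) (hr : IsHom N T r) (hs : IsHom P N s) (ht : IsHom N P t)
    (hfr : f ≫ r = 𝟙 T.M) (hst : s ≫ t = 𝟙 P.M) (hft : f ≫ t = 0) (hsr : s ≫ r = 0)
    (htot : r ≫ f + t ≫ s = 𝟙 N.M) (hT : HasDecomp T) (hP : HasDecomp P) :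
    HasDecomp N := by
  obtain ⟨n1, T1, hT1, ι1, π1, hι1, hπ1, hιπ1, horth1, hsum1⟩ := hT
  obtain ⟨n2, T2, hT2, ι2, π2, hι2, hπ2, hιπ2, horth2, hsum2⟩ := hP
  set G : Fin n1 ⊕ Fin n2 → DescentDatum Γ F hmul := Sum.elim T1 T2 with hG
  set gι : ∀ x, (G x).M ⟶ N.M := fun x =>
    match x with
    | .inl i => ι1 i ≫ f
    | .inr j => ι2 j ≫ s
    with hgι
  set gπ : ∀ x, N.M ⟶ (G x).M := fun x =>
    match x with
    | .inl i => r ≫ π1 i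
    | .inr j => t ≫ π2 j
    with hgπ
  have hkey_simple : ∀ x, (G x).IsSimple := by rintro (i | j); exacts [hT1 i, hT2 j]
  have hkey_ι : ∀ x, IsHom (G x) N (gι x) := by
    rintro (i | j); exacts [(hι1 i).comp hf, (hι2 j).comp hs]
  have hkey_π : ∀ x, IsHom N (G x) (gπ x) := by
    rintro (i | j); exacts [hr.comp (hπ1 i), ht.comp (hπ2 j)]
  have hkey_ιπ : ∀ x, gι x ≫ gπ x = 𝟙 (G x).M := by
    rintro (i | j)
    · show (ι1 i ≫ f) ≫ (r ≫ π1 i) = _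
      rw [Category.assoc, reassoc_of% hfr]; exact hιπ1 i
    · show (ι2 j ≫ s) ≫ (t ≫ π2 j) = _
      rw [Category.assoc, reassoc_of% hst]; exact hιπ2 j
  have hkey_orth : ∀ x y, x ≠ y → gι x ≫ gπ y = 0 := by
    rintro (i | i) (j | j) hne
    · show (ι1 i ≫ f) ≫ (r ≫ π1 j) = 0
      rw [Category.assoc, reassoc_of% hfr]
      exact horth1 i j (by simpa using hne)
    · show (ι1 i ≫ f) ≫ (t ≫ π2 j) = 0
      rw [Category.assoc, reassoc_of% hft, zero_comp, comp_zero]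
    · show (ι2 i ≫ s) ≫ (r ≫ π1 j) = 0
      rw [Category.assoc, reassoc_of% hsr, zero_comp, comp_zero]
    · show (ι2 i ≫ s) ≫ (t ≫ π2 j) = 0
      rw [Category.assoc, reassoc_of% hst]
      exact horth2 i j (by simpa using hne)
  have hkey_sum : ∑ x : Fin n1 ⊕ Fin n2, gπ x ≫ gι x = 𝟙 N.M := by
    rw [Fintype.sum_sum_type]
    have h1 : ∑ i, gπ (Sum.inl i) ≫ gι (Sum.inl i) = r ≫ f := by
      show ∑ i, (r ≫ π1 i) ≫ (ι1 i ≫ f) = r ≫ f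
      calc ∑ i, (r ≫ π1 i) ≫ (ι1 i ≫ f) = r ≫ (∑ i, π1 i ≫ ι1 i) ≫ f := by
            rw [Preadditive.sum_comp, Preadditive.comp_sum]
            exact Finset.sum_congr rfl fun i _ => by simp only [Category.assoc]
        _ = r ≫ f := by rw [hsum1, Category.id_comp]
    have h2 : ∑ j, gπ (Sum.inr j) ≫ gι (Sum.inr j) = t ≫ s := by
      show ∑ j, (t ≫ π2 j) ≫ (ι2 j ≫ s) = t ≫ s
      calc ∑ j, (t ≫ π2 j) ≫ (ι2 j ≫ s) = t ≫ (∑ j, π2 j ≫ ι2 j) ≫ s := by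
            rw [Preadditive.sum_comp, Preadditive.comp_sum]
            exact Finset.sum_congr rfl fun j _ => by simp only [Category.assoc]
        _ = t ≫ s := by rw [hsum2, Category.id_comp]
    rw [h1, h2, htot]
  refine ⟨n1 + n2, fun x => G (finSumFinEquiv.symm x), fun x => hkey_simple _,
    fun x => gι _, fun x => gπ _, fun x => hkey_ι _, fun x => hkey_π _,
    fun x => hkey_ιπ _, fun x y hxy => hkey_orth _ _ (fun h => hxy
      (finSumFinEquiv.symm.injective h)), ?_⟩
  rw [← hkey_sum, ← Equiv.sum_comp finSumFinEquiv.symm (fun x => gπ x ≫ gι x)]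

end DescentDatum

namespace DescentDatum

variable {Γ : Type*} [Group Γ] {F : Γ → C ⥤ C} {hmul : ∀ g h, F (g * h) = F h ⋙ F g}

lemma main_induction [Fintype Γ] [Linear ℚ C] (hadd : ∀ g, (F g).Additive)
    (hsemisimple : ∀ X : C, ∃ (n : ℕ) (S : Fin n → C),
      (∀ i, Simple (S i)) ∧ Nonempty (X ≅ ⨁ S)) :
    ∀ (n : ℕ) (N : DescentDatum Γ F hmul) (S : Fin n → C),
      (∀ i, Simple (S i)) → (N.M ≅ ⨁ S) → HasDecomp N := by
  intro n
  induction n using Nat.strong_induction_on with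
  | _ n IH =>
  intro N S hS isoNS
  by_cases hz : IsZero N.M
  · exact ⟨0, Fin.elim0, fun i => i.elim0, fun i => i.elim0, fun i => i.elim0,
      fun i => i.elim0, fun i => i.elim0, fun i => i.elim0, fun i => i.elim0,
      by rw [(IsZero.iff_id_eq_zero N.M).mp hz]; simp⟩
  by_cases hsimple : N.IsSimple
  · exact ⟨1, fun _ => N, fun _ => hsimple, fun _ => 𝟙 N.M, fun _ => 𝟙 N.M,
      fun _ => IsHom.id N, fun _ => IsHom.id N, fun _ => by simp,
      fun i j hij => absurd (Subsingleton.elim i j) hij, by simp⟩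
  · have hnall : ¬ ∀ (T : DescentDatum Γ F hmul) (f : T.M ⟶ N.M),
        IsHom T N f → Mono f → (IsZero T.M ∨ IsIso f) := fun h => hsimple ⟨hz, h⟩
    push_neg at hnall
    obtain ⟨T, f, hf, hmono, hTne, hfiso⟩ := hnall
    haveI : Mono f := hmono
    haveI : Mono (f ≫ isoNS.hom) := mono_comp _ _
    obtain ⟨r', hr'⟩ := mono_into_simples_splits n S hS T.M (f ≫ isoNS.hom) this
    obtain ⟨r, hrhom, hfr⟩ := exists_equivariant_retraction hadd N T f hf
      (isoNS.hom ≫ r') (by rw [← Category.assoc]; exact hr')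
    have hee : (r ≫ f) ≫ (r ≫ f) = r ≫ f := by
      rw [Category.assoc, ← Category.assoc f, hfr, Category.id_comp]
    have heq : IsHom N N (r ≫ f) := hrhom.comp hf
    set e : N.M ⟶ N.M := r ≫ f with hEe
    set P := complDatum N e hee hadd heq with hP
    have hft : f ≫ kerP N e hee = 0 := by
      rw [← cancel_mono (kerI N e), Category.assoc, kerP_kerI, zero_comp,
        Preadditive.comp_sub, Category.comp_id, hEe, ← Category.assoc, hfr,
        Category.id_comp, sub_self]
    have hsr : kerI N e ≫ r = 0 := by
      rw [← cancel_mono f, Category.assoc, ← hEe, kerI_e, zero_comp]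
    have htot : r ≫ f + kerP N e hee ≫ kerI N e = 𝟙 N.M := by
      rw [kerP_kerI, ← hEe]; abel
    have hPne : ¬ IsZero (kernel e) := by
      intro h
      apply hfiso
      have h0 : kerI N e = (0 : kernel e ⟶ N.M) := h.eq_of_src _ 0
      have h1 : 𝟙 N.M - e = 0 := by rw [← kerP_kerI N e hee, h0, comp_zero]
      have he1 : e = 𝟙 N.M := by rwa [sub_eq_zero, eq_comm] at h1
      exact ⟨r, hfr, by rw [← hEe, he1]⟩
    obtain ⟨k, S1, hS1, ⟨isoT⟩⟩ := hsemisimple T.M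
    obtain ⟨m, S2, hS2, ⟨isoP⟩⟩ := hsemisimple (kernel e)
    have hk1 : 1 ≤ k := by
      rcases Nat.eq_zero_or_pos k with hk | hk
      · subst hk
        exact absurd ((isZero_biproduct_empty S1).of_iso isoT) hTne
      · exact hk
    have hm1 : 1 ≤ m := by
      rcases Nat.eq_zero_or_pos m with hm | hm
      · subst hm
        exact absurd ((isZero_biproduct_empty S2).of_iso isoP) hPne
      · exact hm
    have hn : n = k + m := card_eq_of_binary_decomp S hS
      (isoNS.symm ≪≫ binaryDecompIso f r (kerI N e) (kerP N e hee) hfr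
        (kerI_kerP N e hee) hft hsr htot) S1 hS1 isoT S2 hS2 isoP
    exact hasDecomp_of_split N T P f r (kerI N e) (kerP N e hee) hf hrhom
      (kerI_isHom N e hee hadd heq) (kerP_isHom N e hee hadd heq) hfr
      (kerI_kerP N e hee) hft hsr htot
      (IH k (by omega) T S1 hS1 isoT) (IH m (by omega) P S2 hS2 isoP)

end DescentDatum

/-- Proposition 7.6 a) (l7.3 a)) of "Chow-Lefschetz motives": if `A` is a semisimple
`ℚ`-linear abelian category and `Γ` a finite group acting on `A` by (additive,
`ℚ`-linear) auto-equivalences, then the category `B` of `Γ`-descent data in `A` is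
semisimple: every descent datum is a (bi)direct sum of simple descent data. -/
theorem descent_data_semisimple {C : Type u} [Category.{v} C] [Abelian C] [HasFiniteBiproducts C]
    [Linear ℚ C] (Γ : Type*) [Group Γ] [Fintype Γ]
    (F : Γ → C ⥤ C) (hadd : ∀ g, (F g).Additive) (hequiv : ∀ g, (F g).IsEquivalence)
    (hone : F 1 = 𝟭 C) (hmul : ∀ g h, F (g * h) = F h ⋙ F g)
    (hsemisimple : ∀ X : C, ∃ (n : ℕ) (S : Fin n → C),
      (∀ i, Simple (S i)) ∧ Nonempty (X ≅ ⨁ S)) :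
    ∀ N : DescentDatum Γ F hmul, ∃ (n : ℕ) (T : Fin n → DescentDatum Γ F hmul),
      (∀ i, (T i).IsSimple) ∧
      ∃ (ι : ∀ i, (T i).M ⟶ N.M) (π : ∀ i, N.M ⟶ (T i).M),
        (∀ i, DescentDatum.IsHom (T i) N (ι i)) ∧
        (∀ i, DescentDatum.IsHom N (T i) (π i)) ∧
        (∀ i, ι i ≫ π i = 𝟙 ((T i).M)) ∧
        (∀ i j, i ≠ j → ι i ≫ π j = 0) ∧
        (∑ i, π i ≫ ι i) = 𝟙 N.M := by
  intro N
  obtain ⟨n, S, hS, ⟨iso⟩⟩ := hsemisimple N.M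
  exact DescentDatum.main_induction hadd hsemisimple n N S hS iso
end

section
/- Let C be a symmetric monoidal additive category and U(M) ⊆ C(M)ˣ × Kˣ the unitary group construction U(M) = {(φ,λ) | φ ρ_M(φ) = λ}. If M and N are objects with Hom(M,N) = Hom(N,M) = 0, and the polarization of M ⊕ N is the direct sum of polarizations of M and N, then the inclusion End ω(M) × End ω(N) ↪ End ω(M ⊕ N) induces a group isomorphism U(M) ×_{K^×} U(N) ≅ U(M ⊕ N), where the fibre product is over the second projections to Kˣ. -/
/-- The "unitary group" (as a set of pairs), cf. \eqref{eq0.4} and Lemma 6.4 of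
"Chow-Lefschetz motives": pairs `(φ, λ)` with `φ` a unit lying in the centralizer
`C = C(R)` of `R` and `φ · ρ(φ) = λ • 1`, where `ρ` is the Rosati involution. -/
def UnitarySet {K A : Type*} [Field K] [Ring A] [Algebra K A]
    (R : Subalgebra K A) (τ : A → A) : Set (Aˣ × Kˣ) :=
  {p | (↑p.1 : A) ∈ Subalgebra.centralizer K (R : Set A) ∧
    (↑p.1 : A) * τ (↑p.1 : A) = (↑p.2 : K) • (1 : A)}

/-! The block-diagonal embedding `End V × End W → End (V × W)` is injective, and its image is
the commutant of the projection `prodMapAlgHom (1, 0)` onto `V`. Hence a unit in the centralizer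
of a block-diagonal subalgebra `R₁ × R₂` is block diagonal with invertible blocks, the
centralizer of `R₁ × R₂` is `C(R₁) × C(R₂)`, and a Rosati involution that acts blockwise turns
`φ ρ(φ) = λ` into the same equation on each block. -/

theorem Set.mem_centralizer_image_iff {F M N : Type*} [Mul M] [Mul N] [FunLike F M N]
    [MulHomClass F M N] {f : F} (hf : Function.Injective f) {S : Set M} {x : M} :
    f x ∈ (f '' S).centralizer ↔ x ∈ S.centralizer := by
  simp only [Set.mem_centralizer_iff, Set.forall_mem_image, ← map_mul, hf.eq_iff]

theorem Units.exists_map_eq_of_mem_range {M N : Type*} [Monoid M] [Monoid N] {f : M →* N}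
    (hf : Function.Injective f) {u : Nˣ} (hu : ↑u ∈ Set.range f) (hu' : ↑u⁻¹ ∈ Set.range f) :
    ∃ v : Mˣ, Units.map f v = u := by
  obtain ⟨a, ha⟩ := hu
  obtain ⟨b, hb⟩ := hu'
  have hab : a * b = 1 := hf <| by rw [map_mul, map_one, ha, hb, Units.mul_inv]
  have hba : b * a = 1 := hf <| by rw [map_mul, map_one, ha, hb, Units.inv_mul]
  exact ⟨⟨a, b, hab, hba⟩, Units.ext ha⟩

namespace LinearMap

variable {R M M₂ : Type*} [CommSemiring R] [AddCommMonoid M] [AddCommMonoid M₂]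
  [Module R M] [Module R M₂]

theorem prodMapAlgHom_injective : Function.Injective (prodMapAlgHom R M M₂) := by
  rintro ⟨f, g⟩ ⟨f', g'⟩ h
  refine Prod.ext (LinearMap.ext fun x => ?_) (LinearMap.ext fun y => ?_)
  · simpa using congrArg Prod.fst (LinearMap.congr_fun h (x, 0))
  · simpa using congrArg Prod.snd (LinearMap.congr_fun h (0, y))

theorem mem_range_prodMapAlgHom_of_commute {u : Module.End R (M × M₂)}
    (h : Commute (prodMapAlgHom R M M₂ (1, 0)) u) :
    u ∈ Set.range (prodMapAlgHom R M M₂) := by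
  have hfst : ∀ x : M, (u (x, 0)).2 = 0 := fun x => by
    simpa using congrArg Prod.snd (LinearMap.congr_fun h (x, 0)).symm
  have hsnd : ∀ y : M₂, (u (0, y)).1 = 0 := fun y => by
    simpa [Prod.mk_zero_zero] using congrArg Prod.fst (LinearMap.congr_fun h (0, y))
  refine ⟨(fst R M M₂ ∘ₗ u ∘ₗ inl R M M₂, snd R M M₂ ∘ₗ u ∘ₗ inr R M M₂), ?_⟩
  refine LinearMap.ext fun ⟨x, y⟩ => ?_
  have hsplit : u (x, y) = u (x, 0) + u (0, y) := by
    rw [← map_add, Prod.mk_add_mk, add_zero, zero_add]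
  ext <;> simp [hsplit, hfst, hsnd]

theorem exists_units_prodMapAlgHom_eq_of_commute {u : (Module.End R (M × M₂))ˣ}
    (h : Commute (prodMapAlgHom R M M₂ (1, 0)) ↑u) :
    ∃ p : (Module.End R M)ˣ × (Module.End R M₂)ˣ, ↑u = prodMapAlgHom R M M₂ (↑p.1, ↑p.2) := by
  obtain ⟨v, hv⟩ := Units.exists_map_eq_of_mem_range (f := (prodMapAlgHom R M M₂).toMonoidHom)
    prodMapAlgHom_injective (mem_range_prodMapAlgHom_of_commute h)
    (mem_range_prodMapAlgHom_of_commute h.units_inv_right)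
  exact ⟨MulEquiv.prodUnits v, by rw [← hv]; rfl⟩

end LinearMap

section Unitary

variable {K V W : Type*} [Field K] [AddCommGroup V] [Module K V] [AddCommGroup W] [Module K W]
  {R₁ : Subalgebra K (Module.End K V)} {R₂ : Subalgebra K (Module.End K W)}
  {τ1 : Module.End K V → Module.End K V} {τ2 : Module.End K W → Module.End K W}
  {τ12 : Module.End K (V × W) → Module.End K (V × W)}

theorem prodMapAlgHom_mem_centralizer_map_prod_iff {f : Module.End K V} {g : Module.End K W} :
    LinearMap.prodMapAlgHom K V W (f, g) ∈
        Subalgebra.centralizer K (Subalgebra.map (LinearMap.prodMapAlgHom K V W) (R₁.prod R₂) :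
          Set (Module.End K (V × W))) ↔
      f ∈ Subalgebra.centralizer K (R₁ : Set (Module.End K V)) ∧
        g ∈ Subalgebra.centralizer K (R₂ : Set (Module.End K W)) := by
  rw [← SetLike.mem_coe, Subalgebra.coe_centralizer, Subalgebra.coe_map,
    Set.mem_centralizer_image_iff LinearMap.prodMapAlgHom_injective, Subalgebra.coe_prod,
    Set.centralizer_prod ⟨1, R₁.one_mem⟩ ⟨1, R₂.one_mem⟩]
  rfl

theorem mem_unitarySet_map_prod_iff
    (hcompat : ∀ f g, τ12 (LinearMap.prodMapAlgHom K V W (f, g)) =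
      LinearMap.prodMapAlgHom K V W (τ1 f, τ2 g))
    {u : (Module.End K (V × W))ˣ} {p : (Module.End K V)ˣ} {q : (Module.End K W)ˣ}
    (hu : (↑u : Module.End K (V × W)) = LinearMap.prodMapAlgHom K V W (↑p, ↑q)) (c : Kˣ) :
    (u, c) ∈ UnitarySet (Subalgebra.map (LinearMap.prodMapAlgHom K V W) (R₁.prod R₂)) τ12 ↔
      (p, c) ∈ UnitarySet R₁ τ1 ∧ (q, c) ∈ UnitarySet R₂ τ2 := by
  have hsmul : (c : K) • (1 : Module.End K (V × W)) =
      LinearMap.prodMapAlgHom K V W ((c : K) • 1) := by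
    rw [map_smul, map_one]
  simp only [UnitarySet, Set.mem_ofPred_eq, hu, hcompat, hsmul, ← map_mul,
    LinearMap.prodMapAlgHom_injective.eq_iff, prodMapAlgHom_mem_centralizer_map_prod_iff,
    Prod.ext_iff, Prod.mk_mul_mk, Prod.smul_fst, Prod.smul_snd, Prod.fst_one, Prod.snd_one]
  exact and_and_and_comm

end Unitary

theorem unitary_prod_iso_general (K V W : Type*) [Field K]
    [AddCommGroup V] [Module K V] [AddCommGroup W] [Module K W]
    (R₁ : Subalgebra K (Module.End K V)) (R₂ : Subalgebra K (Module.End K W))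
    (τ1 : Module.End K V → Module.End K V) (τ2 : Module.End K W → Module.End K W)
    (τ12 : Module.End K (V × W) → Module.End K (V × W))
    (hcompat : ∀ f g, τ12 (LinearMap.prodMapAlgHom K V W (f, g)) =
      LinearMap.prodMapAlgHom K V W (τ1 f, τ2 g)) :
    (∀ p ∈ UnitarySet R₁ τ1, ∀ q ∈ UnitarySet R₂ τ2, p.2 = q.2 →
      ∃ u ∈ UnitarySet (Subalgebra.map (LinearMap.prodMapAlgHom K V W)
          (R₁.prod R₂)) τ12,
        (↑u.1 : Module.End K (V × W)) = LinearMap.prodMapAlgHom K V W (↑p.1, ↑q.1) ∧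
        u.2 = p.2) ∧
    (∀ u ∈ UnitarySet (Subalgebra.map (LinearMap.prodMapAlgHom K V W)
        (R₁.prod R₂)) τ12,
      ∃ p ∈ UnitarySet R₁ τ1, ∃ q ∈ UnitarySet R₂ τ2, p.2 = u.2 ∧ q.2 = u.2 ∧
        (↑u.1 : Module.End K (V × W)) = LinearMap.prodMapAlgHom K V W (↑p.1, ↑q.1)) ∧
    Function.Injective
      (fun fg : Module.End K V × Module.End K W => LinearMap.prodMapAlgHom K V W fg) := by
  refine ⟨fun p hp q hq hpq => ?_, fun u hu => ?_, LinearMap.prodMapAlgHom_injective⟩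
  · let u := Units.map (LinearMap.prodMapAlgHom K V W).toMonoidHom
      (MulEquiv.prodUnits.symm (p.1, q.1))
    exact ⟨(u, p.2), (mem_unitarySet_map_prod_iff hcompat rfl p.2).mpr ⟨hp, hpq ▸ hq⟩, rfl, rfl⟩
  · have hblock : Commute (LinearMap.prodMapAlgHom K V W (1, 0)) ↑u.1 :=
      (Subalgebra.mem_centralizer_iff K).mp hu.1 _ ⟨(1, 0), ⟨R₁.one_mem, R₂.zero_mem⟩, rfl⟩
    obtain ⟨⟨p, q⟩, hpq⟩ := LinearMap.exists_units_prodMapAlgHom_eq_of_commute hblock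
    obtain ⟨hp, hq⟩ := (mem_unitarySet_map_prod_iff hcompat hpq u.2).mp hu
    exact ⟨(p, u.2), hp, (q, u.2), hq, rfl, rfl, hpq⟩

/-- Proposition 7.4 (p5.1, second isomorphism) of "Chow-Lefschetz motives", after
applying the fibre functor: if `Hom(M, N) = Hom(N, M) = 0` — so that the image of
`End(M ⊕ N)` is the block-diagonal subalgebra `R₁ × R₂` of `End(ω M ⊕ ω N)` — and the
polarisation of `M ⊕ N` is the direct sum of those of `M` and `N` (so the Rosati
involution `τ` of the sum restricts blockwise to `τ₁` and `τ₂`), then the block-diagonal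
inclusion `End ω(M) × End ω(N) ↪ End ω(M ⊕ N)` induces a group isomorphism
`U(M) ×_{Kˣ} U(N) ≅ U(M ⊕ N)` (fibre product over the second projections to `Kˣ`). -/
theorem unitary_prod_iso (K V W : Type*) [Field K]
    [AddCommGroup V] [Module K V] [AddCommGroup W] [Module K W]
    (R₁ : Subalgebra K (Module.End K V)) (R₂ : Subalgebra K (Module.End K W))
    (τ1 : Module.End K V → Module.End K V) (τ2 : Module.End K W → Module.End K W)
    (τ12 : Module.End K (V × W) → Module.End K (V × W))
    (h1anti : ∀ a b, τ1 (a * b) = τ1 b * τ1 a) (h1inv : ∀ a, τ1 (τ1 a) = a)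
    (h2anti : ∀ a b, τ2 (a * b) = τ2 b * τ2 a) (h2inv : ∀ a, τ2 (τ2 a) = a)
    (h12anti : ∀ a b, τ12 (a * b) = τ12 b * τ12 a) (h12inv : ∀ a, τ12 (τ12 a) = a)
    (hcompat : ∀ f g, τ12 (LinearMap.prodMapAlgHom K V W (f, g)) =
      LinearMap.prodMapAlgHom K V W (τ1 f, τ2 g)) :
    (∀ p ∈ UnitarySet R₁ τ1, ∀ q ∈ UnitarySet R₂ τ2, p.2 = q.2 →
      ∃ u ∈ UnitarySet (Subalgebra.map (LinearMap.prodMapAlgHom K V W)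
          (R₁.prod R₂)) τ12,
        (↑u.1 : Module.End K (V × W)) = LinearMap.prodMapAlgHom K V W (↑p.1, ↑q.1) ∧
        u.2 = p.2) ∧
    (∀ u ∈ UnitarySet (Subalgebra.map (LinearMap.prodMapAlgHom K V W)
        (R₁.prod R₂)) τ12,
      ∃ p ∈ UnitarySet R₁ τ1, ∃ q ∈ UnitarySet R₂ τ2, p.2 = u.2 ∧ q.2 = u.2 ∧
        (↑u.1 : Module.End K (V × W)) = LinearMap.prodMapAlgHom K V W (↑p.1, ↑q.1)) ∧
    Function.Injective
      (fun fg : Module.End K V × Module.End K W => LinearMap.prodMapAlgHom K V W fg) :=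
  unitary_prod_iso_general K V W R₁ R₂ τ1 τ2 τ12 hcompat
end

section
/- Let K be a field, V and W finite-dimensional K-vector spaces, A ⊆ End(V) and B ⊆ End(W) subalgebras, and L a 1-dimensional K-vector space. Then under the canonical isomorphism End(V ⊗ L) ≅ End(V), the centralizer of A ⊗ id_L in End(V ⊗ L) corresponds to the centralizer of A in End(V); moreover the centralizer of the image of A ⊗ B in End(V ⊗ W) is contained in C(A) ⊗ C(B). -/
open TensorProduct LinearMap

/-- Centralizer of the image of a set under an algebra equivalence. -/
theorem myaux_centralizer_image_algEquiv {K R S : Type*} [CommSemiring K] [Semiring R]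
    [Semiring S] [Algebra K R] [Algebra K S] (φ : R ≃ₐ[K] S) (s : Set R) :
    Subalgebra.centralizer K (⇑φ '' s) =
      Subalgebra.map (φ : R →ₐ[K] S) (Subalgebra.centralizer K s) := by
  ext x
  simp only [Subalgebra.mem_centralizer_iff, Subalgebra.mem_map, Set.mem_image,
    forall_exists_index, and_imp]
  constructor
  · intro h
    refine ⟨φ.symm x, fun a ha => ?_, φ.apply_symm_apply x⟩
    apply φ.injective
    rw [map_mul, map_mul, φ.apply_symm_apply]
    exact h (φ a) a ha rfl
  · rintro ⟨y, hy, rfl⟩ g a ha rfl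
    show φ a * φ y = φ y * φ a
    rw [← map_mul, ← map_mul, hy a ha]

/-- key flat lemma, lTensor version -/
theorem myaux_key_lTensor {K M N : Type*} [Field K] [AddCommGroup M] [Module K M]
    [AddCommGroup N] [Module K N] {ι : Type*} [Fintype ι] [DecidableEq ι]
    (f : ι → (M →ₗ[K] M)) (u : N ⊗[K] M) (h : ∀ i, lTensor N (f i) u = 0) :
    u ∈ LinearMap.range (lTensor N (⨅ i, ker (f i)).subtype) := by
  have hker : ker (LinearMap.pi f) = ⨅ i, ker (f i) := ker_pi f
  have hex : Function.Exact ((ker (LinearMap.pi f)).subtype) (LinearMap.pi f) :=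
    (LinearMap.pi f).exact_subtype_ker_map
  have hex2 := Module.Flat.lTensor_exact (R := K) N hex
  rw [← hker]
  have h0 : lTensor N (LinearMap.pi f) u = 0 := by
    apply (TensorProduct.piRight K K N _).injective
    rw [map_zero]
    rw [TensorProduct.piRight_apply]
    funext i
    have hnat : ∀ v : N ⊗[K] M,
        TensorProduct.piRightHom K K N (fun _ : ι => M) (lTensor N (LinearMap.pi f) v) i
        = lTensor N (f i) v := by
      intro v
      induction v using TensorProduct.induction_on with
      | zero => simp
      | tmul x y => simp [TensorProduct.piRightHom_tmul]
      | add a b ha hb => simp [ha, hb]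
    rw [hnat u, h i]
    rfl
  have := hex2.linearMap_ker_eq
  rw [← this]
  exact h0

theorem myaux_comm_comm {K M N : Type*} [Field K] [AddCommGroup M] [Module K M]
    [AddCommGroup N] [Module K N] (u : M ⊗[K] N) :
    TensorProduct.comm K N M (TensorProduct.comm K M N u) = u := by
  induction u using TensorProduct.induction_on with
  | zero => simp
  | tmul x y => rfl
  | add a b ha hb => simp [ha, hb]

theorem myaux_comm_lTensor {K M N P : Type*} [Field K] [AddCommGroup M] [Module K M]
    [AddCommGroup N] [Module K N] [AddCommGroup P] [Module K P]
    (f : M →ₗ[K] P) (u : N ⊗[K] M) :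
    (TensorProduct.comm K N P) (lTensor N f u) = rTensor N f (TensorProduct.comm K N M u) := by
  induction u using TensorProduct.induction_on with
  | zero => simp
  | tmul x y => simp
  | add a b ha hb => simp [ha, hb]

/-- key flat lemma, rTensor version -/
theorem myaux_key_rTensor {K M N : Type*} [Field K] [AddCommGroup M] [Module K M]
    [AddCommGroup N] [Module K N] {ι : Type*} [Fintype ι] [DecidableEq ι]
    (f : ι → (M →ₗ[K] M)) (u : M ⊗[K] N) (h : ∀ i, rTensor N (f i) u = 0) :
    u ∈ LinearMap.range (rTensor N (⨅ i, ker (f i)).subtype) := by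
  set u' := TensorProduct.comm K M N u with hu'
  have h' : ∀ i, lTensor N (f i) u' = 0 := by
    intro i
    apply (TensorProduct.comm K N M).injective
    rw [map_zero, myaux_comm_lTensor]
    have : TensorProduct.comm K N M u' = u := myaux_comm_comm u
    rw [this, h i]
  obtain ⟨w, hw⟩ := myaux_key_lTensor f u' h'
  refine ⟨TensorProduct.comm K N _ w, ?_⟩
  have : u = TensorProduct.comm K N M u' := (myaux_comm_comm u).symm
  rw [this, ← hw, myaux_comm_lTensor]

theorem myaux_rTensor_comm_mul {K A B : Type*} [Field K] [Ring A] [Ring B]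
    [Algebra K A] [Algebra K B] (a : A) (u : A ⊗[K] B) :
    rTensor B (mulLeft K a - mulRight K a) u
      = (a ⊗ₜ[K] (1 : B)) * u - u * (a ⊗ₜ[K] (1 : B)) := by
  induction u using TensorProduct.induction_on with
  | zero => simp
  | tmul x y => simp [TensorProduct.sub_tmul, Algebra.TensorProduct.tmul_mul_tmul]
  | add p q hp hq => rw [map_add, hp, hq, mul_add, add_mul]; abel

theorem myaux_lTensor_comm_mul {K A B : Type*} [Field K] [Ring A] [Ring B]
    [Algebra K A] [Algebra K B] (b : B) (u : A ⊗[K] B) :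
    lTensor A (mulLeft K b - mulRight K b) u
      = ((1 : A) ⊗ₜ[K] b) * u - u * ((1 : A) ⊗ₜ[K] b) := by
  induction u using TensorProduct.induction_on with
  | zero => simp
  | tmul x y => simp [TensorProduct.tmul_sub, Algebra.TensorProduct.tmul_mul_tmul]
  | add p q hp hq => rw [map_add, hp, hq, mul_add, add_mul]; abel

theorem myaux_inf_ker_eq {K R : Type*} [Field K] [Ring R] [Algebra K R]
    (S : Submodule K R) {ι : Type*} (b : Module.Basis ι K ↥S) :
    (⨅ i, ker (mulLeft K (b i : R) - mulRight K (b i : R)))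
      = Subalgebra.toSubmodule (Subalgebra.centralizer K (S : Set R)) := by
  ext x
  simp only [Submodule.mem_iInf, mem_ker, LinearMap.sub_apply, mulLeft_apply, mulRight_apply,
    sub_eq_zero, Subalgebra.mem_toSubmodule, Subalgebra.mem_centralizer_iff,
    SetLike.mem_coe]
  constructor
  · intro h g hg
    have hy : (⟨g, hg⟩ : ↥S) ∈ Submodule.span K (Set.range b) := by
      rw [b.span_eq]; trivial
    have : ∀ y : ↥S, y ∈ Submodule.span K (Set.range b) → (y : R) * x = x * (y : R) := by
      intro y hy
      induction hy using Submodule.span_induction with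
      | mem y hmem => obtain ⟨i, rfl⟩ := hmem; exact h i
      | zero => simp
      | add y z _ _ hy hz => push_cast; rw [add_mul, mul_add, hy, hz]
      | smul c y _ hy => push_cast; rw [smul_mul_assoc, mul_smul_comm, hy]
    exact this ⟨g, hg⟩ hy
  · intro h i
    exact h (b i) (b i).2

theorem myaux_E_eq {K V W : Type*} [Field K]
    [AddCommGroup V] [Module K V] [FiniteDimensional K V]
    [AddCommGroup W] [Module K W] [FiniteDimensional K W]
    (x : Module.End K V ⊗[K] Module.End K W) :
    Module.endTensorEndAlgHom (R := K) (S := K) (A := K) (M := V) (N := W) x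
      = homTensorHomEquiv K V W V W x := by
  induction x using TensorProduct.induction_on with
  | zero => simp
  | tmul f g =>
    rw [Module.endTensorEndAlgHom_apply, homTensorHomEquiv_apply,
      TensorProduct.homTensorHomMap_apply]
    exact TensorProduct.ext' fun v w => rfl
  | add a b ha hb => rw [map_add, map_add, ha, hb]

theorem myaux_E_bij {K V W : Type*} [Field K]
    [AddCommGroup V] [Module K V] [FiniteDimensional K V]
    [AddCommGroup W] [Module K W] [FiniteDimensional K W] :
    Function.Bijective
      (Module.endTensorEndAlgHom (R := K) (S := K) (A := K) (M := V) (N := W)) := by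
  have : ⇑(Module.endTensorEndAlgHom (R := K) (S := K) (A := K) (M := V) (N := W))
      = ⇑(homTensorHomEquiv K V W V W) := funext myaux_E_eq
  rw [this]
  exact (homTensorHomEquiv K V W V W).bijective

set_option maxHeartbeats 2000000 in
set_option synthInstance.maxHeartbeats 400000 in
/-- Proposition 5.2 (iii) & (iv) of "Chow-Lefschetz motives", after applying the fibre
functor. Let `V`, `W` be finite-dimensional `K`-vector spaces, `A ⊆ End(V)`,
`B ⊆ End(W)` subalgebras, and `L` a `1`-dimensional `K`-vector space. Then:
(a) the canonical algebra map `End(V) → End(V ⊗ L)`, `f ↦ f ⊗ id_L`, is bijective, and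
under it the centralizer of `A ⊗ id_L` in `End(V ⊗ L)` corresponds to the centralizer
of `A` in `End(V)`;
(b) the centralizer of the image of `A ⊗ B` in `End(V ⊗ W)` is contained in (the image
of) `C(A) ⊗ C(B)`. -/
theorem centralizer_tensor_invertible_and_contained
    (K V W L : Type*) [Field K]
    [AddCommGroup V] [Module K V] [FiniteDimensional K V]
    [AddCommGroup W] [Module K W] [FiniteDimensional K W]
    [AddCommGroup L] [Module K L] (hL : Module.finrank K L = 1)
    (A : Subalgebra K (Module.End K V)) (B : Subalgebra K (Module.End K W)) :
    (Function.Bijective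
      ((Module.endTensorEndAlgHom (R := K) (S := K) (A := K) (M := V) (N := L)).comp
        Algebra.TensorProduct.includeLeft)) ∧
    (Subalgebra.centralizer K
        (⇑((Module.endTensorEndAlgHom (R := K) (S := K) (A := K) (M := V)
            (N := L)).comp Algebra.TensorProduct.includeLeft) ''
          (A : Set (Module.End K V))) =
      Subalgebra.map
        ((Module.endTensorEndAlgHom (R := K) (S := K) (A := K) (M := V)
            (N := L)).comp Algebra.TensorProduct.includeLeft)
        (Subalgebra.centralizer K (A : Set (Module.End K V)))) ∧
    (Subalgebra.centralizer K
        {z : Module.End K (V ⊗[K] W) | ∃ a ∈ A, ∃ b ∈ B,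
          z = Module.endTensorEndAlgHom (R := K) (S := K) (A := K) (M := V) (N := W)
            (a ⊗ₜ[K] b)} ≤
      Subalgebra.map
        (Module.endTensorEndAlgHom (R := K) (S := K) (A := K) (M := V) (N := W))
        ((Algebra.TensorProduct.map (Subalgebra.centralizer K (A : Set _)).val
          (Subalgebra.centralizer K (B : Set _)).val).range)) := by
  haveI : FiniteDimensional K L := FiniteDimensional.of_finrank_eq_succ hL
  -- Part (a) setup
  let ℓ : L ≃ₗ[K] K := LinearEquiv.ofFinrankEq L K (by rw [hL, Module.finrank_self])
  let e : V ⊗[K] L ≃ₗ[K] V :=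
    (TensorProduct.congr (LinearEquiv.refl K V) ℓ).trans (TensorProduct.rid K V)
  let φ : Module.End K V ≃ₐ[K] Module.End K (V ⊗[K] L) := e.symm.conjAlgEquiv K
  have hfun : ∀ f : Module.End K V,
      ((Module.endTensorEndAlgHom (R := K) (S := K) (A := K) (M := V) (N := L)).comp
        Algebra.TensorProduct.includeLeft) f = φ f := by
    intro f
    apply LinearMap.ext
    intro x
    induction x using TensorProduct.induction_on with
    | zero => simp
    | tmul v l =>
      show (Module.endTensorEndAlgHom (R := K) (S := K) (A := K) (M := V) (N := L)
        (f ⊗ₜ[K] 1)) (v ⊗ₜ[K] l) = _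
      rw [Module.endTensorEndAlgHom_apply]
      show f v ⊗ₜ[K] l = e.symm (f (e (v ⊗ₜ[K] l)))
      simp only [e, LinearEquiv.trans_apply, TensorProduct.congr_tmul,
        LinearEquiv.refl_apply, TensorProduct.rid_tmul, map_smul,
        LinearEquiv.trans_symm, LinearEquiv.symm_symm, TensorProduct.rid_symm_apply,
        TensorProduct.congr_symm_tmul, LinearEquiv.refl_symm, LinearEquiv.refl_apply]
      rw [← TensorProduct.tmul_smul, ← map_smul ℓ.symm, smul_eq_mul, mul_one,
        ℓ.symm_apply_apply]
    | add a b ha hb =>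
      rw [map_add, map_add, ha, hb]
  have hAlg : ((Module.endTensorEndAlgHom (R := K) (S := K) (A := K) (M := V)
      (N := L)).comp Algebra.TensorProduct.includeLeft) = (φ : _ →ₐ[K] _) :=
    AlgHom.ext hfun
  refine ⟨?_, ?_, ?_⟩
  · rw [hAlg]
    exact φ.bijective
  · rw [hAlg]
    exact myaux_centralizer_image_algEquiv φ _
  -- Part (b)
  · intro z hz
    rw [Subalgebra.mem_centralizer_iff] at hz
    have hbij := myaux_E_bij (K := K) (V := V) (W := W)
    obtain ⟨u, hu⟩ := hbij.2 z
    have hinj := hbij.1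
    have hcommA : ∀ a ∈ A, (a ⊗ₜ[K] (1 : Module.End K W)) * u = u * (a ⊗ₜ[K] 1) := by
      intro a ha
      apply hinj
      rw [map_mul, map_mul, hu]
      exact hz _ ⟨a, ha, 1, B.one_mem, rfl⟩
    have hcommB : ∀ b ∈ B, ((1 : Module.End K V) ⊗ₜ[K] b) * u = u * ((1 : _) ⊗ₜ[K] b) := by
      intro b hb
      apply hinj
      rw [map_mul, map_mul, hu]
      exact hz _ ⟨1, A.one_mem, b, hb, rfl⟩
    obtain ⟨CA, hCA⟩ : ∃ CA', CA' = Subalgebra.centralizer K (A : Set (Module.End K V)) :=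
      ⟨_, rfl⟩
    obtain ⟨CB, hCB⟩ : ∃ CB', CB' = Subalgebra.centralizer K (B : Set (Module.End K W)) :=
      ⟨_, rfl⟩
    rw [← hCA, ← hCB]
    let bA : Module.Basis _ K ↥(Subalgebra.toSubmodule A) :=
      Module.finBasis K ↥(Subalgebra.toSubmodule A)
    let bB : Module.Basis _ K ↥(Subalgebra.toSubmodule B) :=
      Module.finBasis K ↥(Subalgebra.toSubmodule B)
    -- first stage: u lies in (toSubmodule CA) ⊗ End W
    have h1 : ∀ i, rTensor (Module.End K W)
        (mulLeft K (bA i : Module.End K V) - mulRight K (bA i : Module.End K V)) u = 0 := by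
      intro i
      rw [myaux_rTensor_comm_mul, sub_eq_zero]
      exact hcommA _ (bA i).2
    have hmem1 := myaux_key_rTensor _ u h1
    have hpA : (⨅ i, ker (mulLeft K (bA i : Module.End K V)
        - mulRight K (bA i : Module.End K V))) = Subalgebra.toSubmodule CA := by
      rw [myaux_inf_ker_eq (Subalgebra.toSubmodule A) bA, hCA, Subalgebra.coe_toSubmodule]
    rw [hpA] at hmem1
    obtain ⟨u₁, hu₁⟩ := hmem1
    -- second stage
    have h2 : ∀ i, lTensor ↥(Subalgebra.toSubmodule CA)
        (mulLeft K (bB i : Module.End K W) - mulRight K (bB i : Module.End K W)) u₁ = 0 := by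
      intro i
      apply Module.Flat.rTensor_preserves_injective_linearMap
        ((Subalgebra.toSubmodule CA).subtype) (Subalgebra.toSubmodule CA).injective_subtype
      rw [map_zero]
      have hnat : rTensor (Module.End K W) (Subalgebra.toSubmodule CA).subtype
          (lTensor ↥(Subalgebra.toSubmodule CA) (mulLeft K (bB i : Module.End K W)
            - mulRight K (bB i : Module.End K W)) u₁)
          = lTensor (Module.End K V) (mulLeft K (bB i : Module.End K W)
            - mulRight K (bB i : Module.End K W)) u := by
        rw [← hu₁]
        change (rTensor _ (Subalgebra.toSubmodule CA).subtype ∘ₗ lTensor _ _) u₁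
          = (lTensor _ _ ∘ₗ rTensor _ (Subalgebra.toSubmodule CA).subtype) u₁
        rw [rTensor_comp_lTensor, lTensor_comp_rTensor]
      rw [hnat, myaux_lTensor_comm_mul, sub_eq_zero]
      exact hcommB _ (bB i).2
    have hmem2 := myaux_key_lTensor _ u₁ h2
    have hqB : (⨅ i, ker (mulLeft K (bB i : Module.End K W)
        - mulRight K (bB i : Module.End K W))) = Subalgebra.toSubmodule CB := by
      rw [myaux_inf_ker_eq (Subalgebra.toSubmodule B) bB, hCB, Subalgebra.coe_toSubmodule]
    rw [hqB] at hmem2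
    obtain ⟨u₂, hu₂⟩ := hmem2
    -- conclude
    rw [Subalgebra.mem_map]
    refine ⟨u, ?_, hu⟩
    rw [AlgHom.mem_range]
    let eA : ↥(Subalgebra.toSubmodule CA) ≃ₗ[K] ↥CA :=
      { toFun := fun x => ⟨x.1, (Subalgebra.mem_toSubmodule CA).mp x.2⟩
        invFun := fun y => ⟨y.1, (Subalgebra.mem_toSubmodule CA).mpr y.2⟩
        map_add' := fun _ _ => rfl
        map_smul' := fun _ _ => rfl
        left_inv := fun _ => rfl
        right_inv := fun _ => rfl }
    let eB : ↥(Subalgebra.toSubmodule CB) ≃ₗ[K] ↥CB :=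
      { toFun := fun x => ⟨x.1, (Subalgebra.mem_toSubmodule CB).mp x.2⟩
        invFun := fun y => ⟨y.1, (Subalgebra.mem_toSubmodule CB).mpr y.2⟩
        map_add' := fun _ _ => rfl
        map_smul' := fun _ _ => rfl
        left_inv := fun _ => rfl
        right_inv := fun _ => rfl }
    refine ⟨TensorProduct.congr eA eB u₂, ?_⟩
    have hmap : ∀ w : ↥(Subalgebra.toSubmodule CA) ⊗[K] ↥(Subalgebra.toSubmodule CB),
        (Algebra.TensorProduct.map CA.val CB.val) (TensorProduct.congr eA eB w)
          = rTensor (Module.End K W) (Subalgebra.toSubmodule CA).subtype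
              (lTensor ↥(Subalgebra.toSubmodule CA) (Subalgebra.toSubmodule CB).subtype w) := by
      intro w
      induction w using TensorProduct.induction_on with
      | zero => simp
      | tmul x y => rfl
      | add a b ha hb => rw [map_add, map_add, map_add, map_add, ha, hb]
    rw [hmap u₂, hu₂, hu₁]
end
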